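/- arXiv:1808.01062 — 2 statements merged into one kernel-verified Lean document; each statement's English description precedes it below -/
import Mathlib

section
/- Let q ∈ (-1,1), q ≠ 0, and let f^{(q)}(x) = (√(1−q)/(2π))·√(4−(1−q)x²)·Σ_{k=1}^∞ (−1)^{k−1} q^{k(k−1)/2} T_{2k−2}(x√(1−q)/2) with partial sums f_J^{(q)} (first J−1 terms). Then for J ≥ 4, sup over |x| < 2/√(1−q) of |f^{(q)}(x) − f_J^{(q)}(x)| ≤ |q|^{(J−1)(J−2)/2}/(π(1−q²)²). -/
open Polynomial Real

/-- The q-Gaussian density (on its support), expanded in Chebyshev polynomials of the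
second kind: `f^{(q)}(x) = (√(1−q)/(2π))·√(4−(1−q)x²)·Σ_{k≥1} (−1)^{k−1} q^{C(k,2)}
T_{2k−2}(x√(1−q)/2)` (written with `k = j + 1`). -/
noncomputable def qGaussianDensity (q x : ℝ) : ℝ :=
  Real.sqrt (1 - q) / (2 * Real.pi) * Real.sqrt (4 - (1 - q) * x ^ 2) *
    ∑' j : ℕ, (-1 : ℝ) ^ j * q ^ (j * (j + 1) / 2) *
      (Polynomial.Chebyshev.U ℝ (2 * j : ℤ)).eval (x * Real.sqrt (1 - q) / 2)

/-- Truncation of the q-Gaussian density to the first `J − 1` terms of its Chebyshev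
expansion. -/
noncomputable def qGaussianDensityTrunc (q : ℝ) (J : ℕ) (x : ℝ) : ℝ :=
  Real.sqrt (1 - q) / (2 * Real.pi) * Real.sqrt (4 - (1 - q) * x ^ 2) *
    ∑ j ∈ Finset.range (J - 1), (-1 : ℝ) ^ j * q ^ (j * (j + 1) / 2) *
      (Polynomial.Chebyshev.U ℝ (2 * j : ℤ)).eval (x * Real.sqrt (1 - q) / 2)

open Finset

/-
Writing `y = x√(1−q)/2 = cos θ`, one has `U_n(cos θ) sin θ = sin((n+1)θ)`, so the prefactor
`√(4−(1−q)x²) = 2 sin θ` absorbs the growth of every Chebyshev polynomial: each term of the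
tail is at most `√(1−q)/π · |q|^{j(j+1)/2}` in absolute value. Since the exponents `j(j+1)/2`
grow at least linearly beyond `j = J − 1`, the tail is dominated by a geometric series, and
the elementary bound `√(1+t) t³ (1−t)(1+t)² ≤ 1` on `[0, 1)` turns its sum into the stated
one.
-/

lemma Polynomial.Chebyshev.abs_eval_U_mul_sqrt_le_one (n : ℤ) {y : ℝ} (hy : |y| ≤ 1) :
    |(Chebyshev.U ℝ n).eval y| * √(1 - y ^ 2) ≤ 1 := by
  obtain ⟨h1, h2⟩ := abs_le.mp hy
  have h := Chebyshev.U_real_cos (arccos y) n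
  rw [cos_arccos h1 h2, sin_arccos] at h
  rw [← abs_of_nonneg (sqrt_nonneg (1 - y ^ 2)), ← abs_mul, h]
  exact abs_sin_le_one _

lemma Nat.triangle_add_le (m i : ℕ) : m * (m + 1) / 2 + i ≤ (m + i) * (m + i + 1) / 2 := by
  rw [Nat.le_div_iff_mul_le two_pos, add_mul,
    Nat.div_mul_cancel (Nat.even_mul_succ_self m).two_dvd]
  nlinarith [Nat.le_mul_self i]

lemma abs_tsum_sub_sum_range_le_of_abs_le_pow_triangle {a : ℕ → ℝ} {K t : ℝ} (ht0 : 0 ≤ t)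
    (ht1 : t < 1) (ha : ∀ j, |a j| ≤ K * t ^ (j * (j + 1) / 2)) (m : ℕ) :
    |∑' j, a j - ∑ j ∈ range m, a j| ≤ K * t ^ (m * (m + 1) / 2) / (1 - t) := by
  have hK : 0 ≤ K := by simpa using (abs_nonneg _).trans (ha 0)
  have hshift (i : ℕ) : |a (i + m)| ≤ K * t ^ (m * (m + 1) / 2) * t ^ i := by
    calc |a (i + m)| ≤ K * t ^ ((m + i) * (m + i + 1) / 2) := by rw [add_comm]; exact ha _
      _ ≤ K * t ^ (m * (m + 1) / 2 + i) :=
        mul_le_mul_of_nonneg_left (pow_le_pow_of_le_one ht0 ht1.le (Nat.triangle_add_le m i)) hK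
      _ = K * t ^ (m * (m + 1) / 2) * t ^ i := by rw [pow_add, mul_assoc]
  have hgeom := (hasSum_geometric_of_lt_one ht0 ht1).mul_left (K * t ^ (m * (m + 1) / 2))
  have hsum : Summable a :=
    (summable_nat_add_iff m).1 (hgeom.summable.of_norm_bounded hshift)
  rw [← hsum.sum_add_tsum_nat_add m, add_sub_cancel_left, div_eq_mul_inv]
  exact tsum_of_norm_bounded (f := fun i => a (i + m)) hgeom hshift

lemma sqrt_one_add_mul_pow_three_div_le {t : ℝ} (ht0 : 0 ≤ t) (ht1 : t < 1) :
    √(1 + t) * t ^ 3 / (1 - t) ≤ 1 / (1 - t ^ 2) ^ 2 := by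
  have h1t : 0 < 1 - t := by linarith
  have h1t2 : 0 < 1 - t ^ 2 := by nlinarith
  rw [div_le_div_iff₀ h1t (by positivity), one_mul]
  set s := √(1 + t)
  have hs0 : 0 ≤ s := sqrt_nonneg _
  have hs2 : s ^ 2 = 1 + t := sq_sqrt (by linarith)
  have hs : s ≤ 3 / 2 := by nlinarith
  -- `t³(1−t) ≤ 27/256` is AM–GM, with equality at `t = 3/4`
  have hAMGM : t ^ 3 * (1 - t) ≤ 27 / 256 := by
    nlinarith [mul_nonneg (sq_nonneg (t - 3 / 4)) (sq_nonneg (t + 1 / 4)), sq_nonneg (t - 3 / 4)]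
  have hprod : s * (t ^ 3 * (1 - t)) * (1 + t) ^ 2 ≤ 1 := by
    calc s * (t ^ 3 * (1 - t)) * (1 + t) ^ 2 ≤ 3 / 2 * (27 / 256) * 2 ^ 2 := by
          gcongr
          linarith
      _ ≤ 1 := by norm_num
  nlinarith [mul_le_mul_of_nonneg_right hprod h1t.le]

lemma sqrt_one_sub_mul_pow_triangle_div_le {q : ℝ} (hq : |q| < 1) {n : ℕ} (hn : 3 ≤ n) :
    √(1 - q) * |q| ^ (n * (n + 1) / 2) / (1 - |q|) ≤
      |q| ^ (n * (n - 1) / 2) / (1 - q ^ 2) ^ 2 := by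
  have ht0 := abs_nonneg q
  have h1t : 0 < 1 - |q| := by linarith
  have hexp : n * (n + 1) / 2 = n * (n - 1) / 2 + n := by
    have h := Nat.triangle_succ n
    rwa [Nat.add_sub_cancel, mul_comm] at h
  have hsqrt : √(1 - q) ≤ √(1 + |q|) := sqrt_le_sqrt (by linarith [neg_abs_le q])
  have hpow : |q| ^ n ≤ |q| ^ 3 := pow_le_pow_of_le_one ht0 hq.le hn
  calc √(1 - q) * |q| ^ (n * (n + 1) / 2) / (1 - |q|)
      = |q| ^ (n * (n - 1) / 2) * (√(1 - q) * |q| ^ n / (1 - |q|)) := by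
        rw [hexp, pow_add]; ring
    _ ≤ |q| ^ (n * (n - 1) / 2) * (√(1 + |q|) * |q| ^ 3 / (1 - |q|)) := by
        gcongr
    _ ≤ |q| ^ (n * (n - 1) / 2) * (1 / (1 - |q| ^ 2) ^ 2) :=
        mul_le_mul_of_nonneg_left (sqrt_one_add_mul_pow_three_div_le ht0 hq) (by positivity)
    _ = |q| ^ (n * (n - 1) / 2) / (1 - q ^ 2) ^ 2 := by rw [sq_abs, mul_one_div]

lemma sqrt_one_sub_sq_mul_abs_chebyshev_tail_le {q y : ℝ} (hq : |q| < 1) (hy : |y| < 1)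
    (m : ℕ) :
    √(1 - y ^ 2) * |∑' j : ℕ, (-1 : ℝ) ^ j * q ^ (j * (j + 1) / 2) *
        (Chebyshev.U ℝ (2 * j : ℤ)).eval y -
      ∑ j ∈ range m, (-1 : ℝ) ^ j * q ^ (j * (j + 1) / 2) *
        (Chebyshev.U ℝ (2 * j : ℤ)).eval y|
      ≤ |q| ^ (m * (m + 1) / 2) / (1 - |q|) := by
  have hD : 0 < √(1 - y ^ 2) := sqrt_pos.2 (by nlinarith [sq_abs y, abs_nonneg y])
  have hU (n : ℤ) : |(Chebyshev.U ℝ n).eval y| ≤ (√(1 - y ^ 2))⁻¹ := by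
    rw [← one_div, le_div_iff₀ hD]
    exact Chebyshev.abs_eval_U_mul_sqrt_le_one n hy.le
  rw [← le_div_iff₀' hD]
  refine (abs_tsum_sub_sum_range_le_of_abs_le_pow_triangle (K := (√(1 - y ^ 2))⁻¹)
    (abs_nonneg q) hq (fun j => ?_) m).trans_eq (by ring)
  simp only [abs_mul, abs_pow, abs_neg, abs_one, one_pow, one_mul]
  rw [mul_comm]
  exact mul_le_mul_of_nonneg_right (hU _) (by positivity)

lemma abs_mul_sqrt_div_two_lt_one {q x : ℝ} (hq : q < 1) (hx : |x| < 2 / √(1 - q)) :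
    |x * √(1 - q) / 2| < 1 := by
  have hs : 0 < √(1 - q) := sqrt_pos.2 (by linarith)
  rw [abs_div, abs_mul, abs_of_pos hs, abs_two]
  linarith [(lt_div_iff₀ hs).1 hx]

lemma sqrt_four_sub_eq_two_mul_sqrt {q : ℝ} (hq : q ≤ 1) (x : ℝ) :
    √(4 - (1 - q) * x ^ 2) = 2 * √(1 - (x * √(1 - q) / 2) ^ 2) := by
  rw [show 4 - (1 - q) * x ^ 2 = 2 ^ 2 * (1 - (x * √(1 - q) / 2) ^ 2) by
      rw [div_pow, mul_pow, sq_sqrt (by linarith)]; ring,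
    sqrt_mul (by norm_num), sqrt_sq zero_le_two]

theorem qGaussianDensity_trunc_error_general (q : ℝ) (hq : -1 < q) (hq' : q < 1)
    (J : ℕ) (hJ : 4 ≤ J) (x : ℝ) (hx : |x| < 2 / Real.sqrt (1 - q)) :
    |qGaussianDensity q x - qGaussianDensityTrunc q J x|
      ≤ |q| ^ ((J - 1) * (J - 2) / 2) / (Real.pi * (1 - q ^ 2) ^ 2) := by
  have hq1 : |q| < 1 := abs_lt.2 ⟨hq, hq'⟩
  have hy := abs_mul_sqrt_div_two_lt_one hq' hx
  rw [qGaussianDensity, qGaussianDensityTrunc, sqrt_four_sub_eq_two_mul_sqrt hq'.le, ← mul_sub,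
    show J - 2 = J - 1 - 1 by omega]
  set D := √(1 - (x * √(1 - q) / 2) ^ 2)
  set S := ∑' j : ℕ, (-1 : ℝ) ^ j * q ^ (j * (j + 1) / 2) *
      (Chebyshev.U ℝ (2 * j : ℤ)).eval (x * √(1 - q) / 2) -
    ∑ j ∈ range (J - 1), (-1 : ℝ) ^ j * q ^ (j * (j + 1) / 2) *
      (Chebyshev.U ℝ (2 * j : ℤ)).eval (x * √(1 - q) / 2)
  calc |√(1 - q) / (2 * π) * (2 * D) * S| = √(1 - q) / π * (D * |S|) := by
        rw [abs_mul, abs_of_nonneg (by positivity)]; ring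
    _ ≤ √(1 - q) / π * (|q| ^ ((J - 1) * (J - 1 + 1) / 2) / (1 - |q|)) := by
        gcongr
        exact sqrt_one_sub_sq_mul_abs_chebyshev_tail_le hq1 hy _
    _ = √(1 - q) * |q| ^ ((J - 1) * (J - 1 + 1) / 2) / (1 - |q|) / π := by ring
    _ ≤ |q| ^ ((J - 1) * (J - 1 - 1) / 2) / (1 - q ^ 2) ^ 2 / π := div_le_div_of_nonneg_right
        (sqrt_one_sub_mul_pow_triangle_div_le hq1 (n := J - 1) (by omega)) pi_pos.le
    _ = _ := by rw [div_div, mul_comm ((1 - q ^ 2) ^ 2)]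

theorem qGaussianDensity_trunc_error (q : ℝ) (hq : -1 < q) (hq' : q < 1) (hq0 : q ≠ 0)
    (J : ℕ) (hJ : 4 ≤ J) (x : ℝ) (hx : |x| < 2 / Real.sqrt (1 - q)) :
    |qGaussianDensity q x - qGaussianDensityTrunc q J x|
      ≤ |q| ^ ((J - 1) * (J - 2) / 2) / (Real.pi * (1 - q ^ 2) ^ 2) :=
  qGaussianDensity_trunc_error_general q hq hq' J hJ x hx
end

section
/- Let μ be a probability measure and f, g ∈ L²(μ) with f ≥ 1 and g ≥ 1 μ-a.e. Define probability measures ν_f(dx) = f·μ(dx)/∫f dμ and ν_g(dx) = g·μ(dx)/∫g dμ. Then D_KL(ν_g‖ν_f) ≤ (1/∫f dμ)·∫(g − f)² dμ. -/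
/-!
Write `φ(a, b) = a log (a / b) - a + b ≥ 0`, `F = ∫ f`, `G = ∫ g`, `Φ = ∫ φ(g, f)` and
`D = ∫ (g - f)²`. Expanding the logarithm, the divergence equals
`(Φ + (G - F) + G log (F / G)) / G`. For `a, b ≥ 1` one has `φ(a, b) ≤ (a - b)² / 2` and
`φ(a, b) ≤ √a |a - b|`, so by AM-GM `(1 + t) Φ ≤ D + t² G / 2` for every `t ≥ 0`.
If `F ≤ G`, take `t = 0` and `log (F / G) ≤ F / G - 1`. If `G < F`, the normalization term is
negative, `G log (F / G) - (F - G) ≤ -(F - G)² / (2F)` (from `log x ≤ (x - x⁻¹) / 2`), and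
`t = (F - G) / G` gives `F Φ ≤ G D + (F - G)² / 2`, which exactly compensates.
-/

open MeasureTheory Real

lemma log_le_sub_inv_div_two {x : ℝ} (hx : 1 ≤ x) : log x ≤ (x - x⁻¹) / 2 :=
  sinh_log (by positivity) ▸ self_le_sinh_iff.2 (log_nonneg hx)

lemma mul_log_div_sub_add_nonneg {a b : ℝ} (ha : 0 < a) (hb : 0 < b) :
    0 ≤ a * log (a / b) - a + b := by
  have h := mul_le_mul_of_nonneg_left (one_sub_inv_le_log_of_pos (div_pos ha hb)) ha.le
  rw [inv_div, mul_one_sub, mul_div_cancel₀ _ ha.ne'] at h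
  linarith

lemma mul_log_div_sub_add_le_sq_div_two {a b : ℝ} (ha : 1 ≤ a) (hb : 1 ≤ b) :
    a * log (a / b) - a + b ≤ (a - b) ^ 2 / 2 := by
  have ha0 : 0 < a := by positivity
  have hb0 : 0 < b := by positivity
  rcases le_total b a with hba | hab
  · have hlog := log_le_sub_inv_div_two ((one_le_div hb0).2 hba)
    rw [inv_div] at hlog
    calc a * log (a / b) - a + b ≤ a * ((a / b - b / a) / 2) - a + b := by gcongr
      _ = (a - b) ^ 2 / (2 * b) := by field_simp; ring
      _ ≤ (a - b) ^ 2 / 2 := div_le_div_of_nonneg_left (sq_nonneg _) two_pos (by linarith)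
  · have hlog := le_log_one_add_of_nonneg (div_nonneg (sub_nonneg.2 hab) ha0.le)
    rw [show 1 + (b - a) / a = (a / b)⁻¹ by field_simp; ring, log_inv] at hlog
    calc a * log (a / b) - a + b ≤ a * -(2 * ((b - a) / a) / ((b - a) / a + 2)) - a + b := by
          gcongr; linarith
      _ = (a - b) ^ 2 / (a + b) := by field_simp; ring
      _ ≤ (a - b) ^ 2 / 2 := div_le_div_of_nonneg_left (sq_nonneg _) two_pos (by linarith)

lemma mul_log_div_sub_add_le_sqrt_mul_abs {a b : ℝ} (ha : 1 ≤ a) (hb : 1 ≤ b) :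
    a * log (a / b) - a + b ≤ √a * |a - b| := by
  have ha0 : 0 < a := by positivity
  have hb0 : 0 < b := by positivity
  rcases le_total b a with hba | hab
  · have hsb : 1 ≤ √b := one_le_sqrt.2 hb
    have hlog := log_le_sub_inv_div_two ((one_le_div (by positivity)).2 (sqrt_le_sqrt hba))
    rw [inv_div, log_div (by positivity) (by positivity), log_sqrt ha0.le, log_sqrt hb0.le] at hlog
    have hmul : a * log (a / b) ≤ √a * (a - b) / √b :=
      calc a * log (a / b) = a * (log a - log b) := by rw [log_div ha0.ne' hb0.ne']
        _ ≤ a * (√a / √b - √b / √a) := mul_le_mul_of_nonneg_left (by linarith) ha0.le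
        _ = √a * (a - b) / √b := by
          field_simp
          rw [sq_sqrt ha0.le, sq_sqrt hb0.le]
    have : √a * (a - b) / √b ≤ √a * (a - b) := div_le_self (by positivity) hsb
    rw [abs_of_nonneg (sub_nonneg.2 hba)]
    linarith
  · have hlog : log (a / b) ≤ 0 := log_nonpos (by positivity) ((div_le_one hb0).2 hab)
    have hsa : 1 ≤ √a := one_le_sqrt.2 ha
    rw [abs_of_nonpos (sub_nonpos.2 hab)]
    nlinarith [mul_nonpos_of_nonneg_of_nonpos ha0.le hlog]

lemma one_add_mul_mul_log_div_sub_add_le {a b t : ℝ} (ha : 1 ≤ a) (hb : 1 ≤ b) (ht : 0 ≤ t) :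
    (1 + t) * (a * log (a / b) - a + b) ≤ (a - b) ^ 2 + t ^ 2 * a / 2 := by
  have hsq := mul_log_div_sub_add_le_sq_div_two ha hb
  have hsqrt := mul_le_mul_of_nonneg_left (mul_log_div_sub_add_le_sqrt_mul_abs ha hb) ht
  have amgm : 2 * (t * (√a * |a - b|)) ≤ (a - b) ^ 2 + t ^ 2 * a := by
    nlinarith [sq_nonneg (|a - b| - t * √a), sq_abs (a - b), sq_sqrt (by linarith : (0 : ℝ) ≤ a)]
  nlinarith

lemma div_le_one_div_mul_of_forall_one_add_mul_le {F G Φ D : ℝ} (hF : 0 < F) (hG : 0 < G)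
    (hD : 0 ≤ D) (h : ∀ t, 0 ≤ t → (1 + t) * Φ ≤ D + t ^ 2 * G / 2) :
    (Φ + (G - F) + G * log (F / G)) / G ≤ 1 / F * D := by
  rcases le_total F G with hFG | hGF
  · have hlog : log (F / G) ≤ F / G - 1 := log_le_sub_one_of_pos (by positivity)
    have hΦ : Φ ≤ D := by simpa using h 0 le_rfl
    calc (Φ + (G - F) + G * log (F / G)) / G ≤ (D + (G - F) + G * (F / G - 1)) / G := by gcongr
      _ = 1 / G * D := by field_simp; ring
      _ ≤ 1 / F * D := by gcongr
  · have hlog := log_le_sub_inv_div_two ((one_le_div hG).2 hGF)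
    have hΦ : F * Φ ≤ G * D + (F - G) ^ 2 / 2 := by
      have ht := h ((F - G) / G) (div_nonneg (sub_nonneg.2 hGF) hG.le)
      rw [show (1 + (F - G) / G) * Φ = F * Φ / G by field_simp; ring,
        show D + ((F - G) / G) ^ 2 * G / 2 = (G * D + (F - G) ^ 2 / 2) / G by field_simp,
        div_le_div_iff_of_pos_right hG] at ht
      exact ht
    calc (Φ + (G - F) + G * log (F / G)) / G
        ≤ (Φ + (G - F) + G * ((F / G - (F / G)⁻¹) / 2)) / G := by gcongr
      _ = (F * Φ - (F - G) ^ 2 / 2) / (F * G) := by field_simp; ring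
      _ ≤ G * D / (F * G) := by gcongr; linarith
      _ = 1 / F * D := by field_simp

section

variable {α : Type*} [MeasurableSpace α] {μ : Measure α} {f g : α → ℝ}

lemma one_le_integral_of_ae_one_le [IsProbabilityMeasure μ] (hf : Integrable f μ)
    (h1 : ∀ᵐ x ∂μ, 1 ≤ f x) : 1 ≤ ∫ x, f x ∂μ := by
  simpa using integral_mono_ae (integrable_const 1) hf h1

lemma integrable_mul_log_div_sub_add (hfi : Integrable f μ) (hgi : Integrable g μ)
    (hf1 : ∀ᵐ x ∂μ, 1 ≤ f x) (hg1 : ∀ᵐ x ∂μ, 1 ≤ g x)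
    (hdiff : Integrable (fun x => (g x - f x) ^ 2) μ) :
    Integrable (fun x => g x * log (g x / f x) - g x + f x) μ := by
  have hf := hfi.aemeasurable
  have hg := hgi.aemeasurable
  have hmeas : AEMeasurable (fun x => g x * log (g x / f x) - g x + f x) μ :=
    ((hg.mul (measurable_log.comp_aemeasurable (hg.div hf))).sub hg).add hf
  refine (hdiff.div_const 2).mono' hmeas.aestronglyMeasurable ?_
  filter_upwards [hf1, hg1] with x hfx hgx
  rw [norm_of_nonneg (mul_log_div_sub_add_nonneg (by linarith) (by linarith))]
  exact mul_log_div_sub_add_le_sq_div_two hgx hfx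

lemma integral_div_mul_log_div_div (hfi : Integrable f μ) (hgi : Integrable g μ)
    (hf0 : ∀ᵐ x ∂μ, 0 < f x) (hg0 : ∀ᵐ x ∂μ, 0 < g x)
    (hF : ∫ x, f x ∂μ ≠ 0) (hG : ∫ x, g x ∂μ ≠ 0)
    (hφ : Integrable (fun x => g x * log (g x / f x) - g x + f x) μ) :
    ∫ x, (g x / ∫ y, g y ∂μ) * log ((g x / ∫ y, g y ∂μ) / (f x / ∫ y, f y ∂μ)) ∂μ
      = (∫ x, g x * log (g x / f x) - g x + f x ∂μ + ((∫ x, g x ∂μ) - ∫ x, f x ∂μ)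
          + (∫ x, g x ∂μ) * log ((∫ x, f x ∂μ) / ∫ x, g x ∂μ)) / ∫ x, g x ∂μ := by
  set F := ∫ x, f x ∂μ
  set G := ∫ x, g x ∂μ
  have hpt : (fun x => (g x / G) * log ((g x / G) / (f x / F))) =ᵐ[μ]
      fun x => ((g x * log (g x / f x) - g x + f x) + (g x - f x) + g x * log (F / G)) / G := by
    filter_upwards [hf0, hg0] with x hfx hgx
    rw [show g x / G / (f x / F) = g x / f x * (F / G) by field_simp,
      log_mul (by positivity) (div_ne_zero hF hG)]
    ring
  have hsub : Integrable (fun x => g x - f x) μ := hgi.sub hfi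
  have hsum : Integrable (fun x => (g x * log (g x / f x) - g x + f x) + (g x - f x)) μ :=
    hφ.add hsub
  rw [integral_congr_ae hpt, integral_div, integral_add hsum (hgi.mul_const _),
    integral_add hφ hsub, integral_sub hgi hfi, integral_mul_const]

lemma one_add_mul_integral_le (hgi : Integrable g μ)
    (hf1 : ∀ᵐ x ∂μ, 1 ≤ f x) (hg1 : ∀ᵐ x ∂μ, 1 ≤ g x)
    (hdiff : Integrable (fun x => (g x - f x) ^ 2) μ)
    (hφ : Integrable (fun x => g x * log (g x / f x) - g x + f x) μ) {t : ℝ} (ht : 0 ≤ t) :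
    (1 + t) * ∫ x, g x * log (g x / f x) - g x + f x ∂μ
      ≤ ∫ x, (g x - f x) ^ 2 ∂μ + t ^ 2 * (∫ x, g x ∂μ) / 2 := by
  have hpt : ∀ᵐ x ∂μ, (1 + t) * (g x * log (g x / f x) - g x + f x)
      ≤ (g x - f x) ^ 2 + t ^ 2 * g x / 2 := by
    filter_upwards [hf1, hg1] with x hfx hgx
    exact one_add_mul_mul_log_div_sub_add_le hgx hfx ht
  have hg' : Integrable (fun x => t ^ 2 * g x / 2) μ := (hgi.const_mul _).div_const _
  calc (1 + t) * ∫ x, g x * log (g x / f x) - g x + f x ∂μ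
      = ∫ x, (1 + t) * (g x * log (g x / f x) - g x + f x) ∂μ := (integral_const_mul _ _).symm
    _ ≤ ∫ x, (g x - f x) ^ 2 + t ^ 2 * g x / 2 ∂μ :=
      integral_mono_ae (hφ.const_mul _) (hdiff.add hg') hpt
    _ = ∫ x, (g x - f x) ^ 2 ∂μ + t ^ 2 * (∫ x, g x ∂μ) / 2 := by
      rw [integral_add hdiff hg', integral_div, integral_const_mul]

end

theorem klDiv_normalized_le_general {α : Type*} [MeasurableSpace α]
    (μ : Measure α) [IsProbabilityMeasure μ]
    (f g : α → ℝ)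
    (hf1 : ∀ᵐ x ∂μ, 1 ≤ f x) (hg1 : ∀ᵐ x ∂μ, 1 ≤ g x)
    (hfi : Integrable f μ) (hgi : Integrable g μ)
    (hdiff : Integrable (fun x => (g x - f x) ^ 2) μ) :
    ∫ x, (g x / ∫ y, g y ∂μ) * Real.log ((g x / ∫ y, g y ∂μ) / (f x / ∫ y, f y ∂μ)) ∂μ
      ≤ (1 / ∫ y, f y ∂μ) * ∫ x, (g x - f x) ^ 2 ∂μ := by
  have hF := one_le_integral_of_ae_one_le hfi hf1
  have hG := one_le_integral_of_ae_one_le hgi hg1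
  have hφ := integrable_mul_log_div_sub_add hfi hgi hf1 hg1 hdiff
  rw [integral_div_mul_log_div_div hfi hgi (hf1.mono fun _ h => by linarith)
    (hg1.mono fun _ h => by linarith) (by positivity) (by positivity) hφ]
  exact div_le_one_div_mul_of_forall_one_add_mul_le (by linarith) (by linarith)
    (integral_nonneg fun _ => sq_nonneg _)
    fun _ ht => one_add_mul_integral_le hgi hf1 hg1 hdiff hφ ht

/-- For likelihoods `f, g ≥ 1` in `L²(μ)`, the KL divergence between the normalized
posteriors `ν_g = g·μ/∫g` and `ν_f = f·μ/∫f` (written in density form) is bounded by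
`(1/∫f dμ)·∫(g − f)² dμ`. -/
theorem klDiv_normalized_le {α : Type*} [MeasurableSpace α]
    (μ : Measure α) [IsProbabilityMeasure μ]
    (f g : α → ℝ) (hf : Measurable f) (hg : Measurable g)
    (hf1 : ∀ᵐ x ∂μ, 1 ≤ f x) (hg1 : ∀ᵐ x ∂μ, 1 ≤ g x)
    (hfi : Integrable f μ) (hgi : Integrable g μ)
    (hdiff : Integrable (fun x => (g x - f x) ^ 2) μ)
    (hkl : Integrable (fun x =>
      (g x / ∫ y, g y ∂μ) * Real.log ((g x / ∫ y, g y ∂μ) / (f x / ∫ y, f y ∂μ))) μ) :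
    ∫ x, (g x / ∫ y, g y ∂μ) * Real.log ((g x / ∫ y, g y ∂μ) / (f x / ∫ y, f y ∂μ)) ∂μ
      ≤ (1 / ∫ y, f y ∂μ) * ∫ x, (g x - f x) ^ 2 ∂μ :=
  klDiv_normalized_le_general μ f g hf1 hg1 hfi hgi hdiff
end
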